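/- arXiv:1602.03671 — 4 statements merged into one kernel-verified Lean document; each statement's English description precedes it below -/
import Mathlib

section
/- The real quaternion algebra ℍ is ℤ₂³-commutative: the family of ℝ-submodules of ℍ assigning the real span of 1 to degree (0,0,0), the real span of i to degree (0,1,1), the real span of j to degree (1,0,1), the real span of k to degree (1,1,0), and the zero submodule to the remaining four elements of (ZMod 2)³, is an internal direct sum decomposition of ℍ making it a (ZMod 2)³-graded ℝ-algebra (1 lies in the degree-(0,0,0) component and the product of elements of degrees α and β lies in the component of degree α+β); moreover, any homogeneous x of degree α and y of degree β satisfy x*y = y*x if ⟨α,β⟩ = 0 and x*y = -(y*x) if ⟨α,β⟩ = 1. -/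
/-!
Each nonzero graded piece is the real line through one of the basis vectors `1, i, j, k`, and
their degrees form a Klein four-subgroup of `(ZMod 2)³`: indexing the basis by `Fin 4`, the
degree turns `^^^` into `+`. So the grading is internal because `1, i, j, k` is a basis, every
homogeneous element is a real multiple of a basis vector, and the remaining claims reduce to
the `4 × 4` multiplication table: `eₐ e_b = ± e_{a ^^^ b}`, and two distinct imaginary units,
whose degrees have scalar product `1`, anticommute, while all other pairs commute and have
degrees with scalar product `0`.
-/

open Quaternion

/-- The `ℤ₂³`-grading of the real quaternions: the real span of `1` in degree `(0,0,0)`,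
of `i` in degree `(0,1,1)`, of `j` in degree `(1,0,1)`, of `k` in degree `(1,1,0)`,
and `0` in the four remaining degrees. -/
noncomputable def quaternionGrading : (Fin 3 → ZMod 2) → Submodule ℝ ℍ[ℝ] := fun α =>
  if α = ![0, 0, 0] then Submodule.span ℝ {(1 : ℍ[ℝ])}
  else if α = ![0, 1, 1] then Submodule.span ℝ {(⟨0, 1, 0, 0⟩ : ℍ[ℝ])}
  else if α = ![1, 0, 1] then Submodule.span ℝ {(⟨0, 0, 1, 0⟩ : ℍ[ℝ])}
  else if α = ![1, 1, 0] then Submodule.span ℝ {(⟨0, 0, 0, 1⟩ : ℍ[ℝ])}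
  else ⊥

open Set Submodule

section SpanSingletonGrading

variable {ι G R M A : Type*} [CommRing R] {deg : ι → G}

theorem Module.Basis.isInternal_of_span_singleton [DecidableEq G] [AddCommGroup M] [Module R M]
    [Nontrivial R] (b : Module.Basis ι R M) {𝒜 : G → Submodule R M}
    (h_deg : ∀ i, 𝒜 (deg i) = R ∙ b i) (h_bot : ∀ α ∉ range deg, 𝒜 α = ⊥) :
    DirectSum.IsInternal 𝒜 := by
  have h_ne_bot : ∀ i, 𝒜 (deg i) ≠ ⊥ := fun i => by simp [h_deg, b.ne_zero i]
  apply DirectSum.isInternal_submodule_of_iSupIndep_of_iSup_eq_top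
  · rw [← iSupIndep_ne_bot]
    refine iSupIndep.comp' (f := fun i => ⟨deg i, h_ne_bot i⟩) ?_ ?_
    · simpa only [Function.comp_def, h_deg] using b.linearIndependent.iSupIndep_span_singleton
    · rintro ⟨α, hα⟩
      obtain ⟨i, rfl⟩ : α ∈ range deg := by_contra fun h => hα (h_bot α h)
      exact ⟨i, rfl⟩
  · refine eq_top_iff.2 (le_trans ?_ (iSup_comp_le 𝒜 deg))
    rw [← b.span_eq, span_range_eq_iSup]
    simp only [h_deg, le_refl]

theorem eq_zero_or_exists_eq_smul_of_mem [AddCommGroup M] [Module R M] {v : ι → M}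
    {𝒜 : G → Submodule R M} (h_deg : ∀ i, 𝒜 (deg i) = R ∙ v i)
    (h_bot : ∀ α ∉ range deg, 𝒜 α = ⊥) {α : G} {x : M} (hx : x ∈ 𝒜 α) :
    x = 0 ∨ ∃ i, deg i = α ∧ ∃ r : R, x = r • v i := by
  by_cases hα : α ∈ range deg
  · obtain ⟨i, rfl⟩ := hα
    rw [h_deg, mem_span_singleton] at hx
    obtain ⟨r, rfl⟩ := hx
    exact Or.inr ⟨i, rfl, r, rfl⟩
  · rw [h_bot α hα, mem_bot] at hx
    exact Or.inl hx

variable [Ring A] [Algebra R A] {v : ι → A} {𝒜 : G → Submodule R A}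

theorem mul_mem_of_span_singleton [Add G] (h_deg : ∀ i, 𝒜 (deg i) = R ∙ v i)
    (h_bot : ∀ α ∉ range deg, 𝒜 α = ⊥) (h_mul : ∀ i j, v i * v j ∈ 𝒜 (deg i + deg j))
    {α β : G} {x y : A} (hx : x ∈ 𝒜 α) (hy : y ∈ 𝒜 β) : x * y ∈ 𝒜 (α + β) := by
  obtain rfl | ⟨i, rfl, r, rfl⟩ := eq_zero_or_exists_eq_smul_of_mem h_deg h_bot hx
  · simp
  obtain rfl | ⟨j, rfl, s, rfl⟩ := eq_zero_or_exists_eq_smul_of_mem h_deg h_bot hy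
  · simp
  rw [smul_mul_smul_comm]
  exact smul_mem _ _ (h_mul i j)

theorem mul_eq_smul_mul_rev_of_span_singleton (h_deg : ∀ i, 𝒜 (deg i) = R ∙ v i)
    (h_bot : ∀ α ∉ range deg, 𝒜 α = ⊥) (ε : G → G → R)
    (h_comm : ∀ i j, v i * v j = ε (deg i) (deg j) • (v j * v i))
    {α β : G} {x y : A} (hx : x ∈ 𝒜 α) (hy : y ∈ 𝒜 β) : x * y = ε α β • (y * x) := by
  obtain rfl | ⟨i, rfl, r, rfl⟩ := eq_zero_or_exists_eq_smul_of_mem h_deg h_bot hx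
  · simp
  obtain rfl | ⟨j, rfl, s, rfl⟩ := eq_zero_or_exists_eq_smul_of_mem h_deg h_bot hy
  · simp
  rw [smul_mul_smul_comm, smul_mul_smul_comm, h_comm, smul_comm, mul_comm]

end SpanSingletonGrading

/-- `(-1) ^ ⟨α, β⟩`, the commutation factor of `ℤ₂ⁿ`-commutativity. -/
def z2Sign {ι : Type*} [Fintype ι] (R : Type*) [Ring R] (α β : ι → ZMod 2) : R :=
  if ∑ i, α i * β i = 0 then 1 else -1

def quaternionDegree : Fin 4 → Fin 3 → ZMod 2 := ![![0, 0, 0], ![0, 1, 1], ![1, 0, 1], ![1, 1, 0]]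

theorem quaternionDegree_xor (i j : Fin 4) :
    quaternionDegree (i ^^^ j) = quaternionDegree i + quaternionDegree j := by
  revert i j; decide

theorem quaternionDegree_dot_eq_zero_iff (i j : Fin 4) :
    ∑ k, quaternionDegree i k * quaternionDegree j k = 0 ↔ i = 0 ∨ j = 0 ∨ i = j := by
  revert i j; decide

noncomputable def quaternionBasis : Module.Basis (Fin 4) ℝ ℍ[ℝ] :=
  QuaternionAlgebra.basisOneIJK _ _ _

local notation "𝐞" => quaternionBasis

@[simp]
theorem quaternionBasis_re (i : Fin 4) : (𝐞 i).re = if i = 0 then 1 else 0 := by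
  change 𝐞.repr (𝐞 i) 0 = _
  rw [𝐞.repr_self, Finsupp.single_apply]

@[simp]
theorem quaternionBasis_imI (i : Fin 4) : (𝐞 i).imI = if i = 1 then 1 else 0 := by
  change 𝐞.repr (𝐞 i) 1 = _
  rw [𝐞.repr_self, Finsupp.single_apply]

@[simp]
theorem quaternionBasis_imJ (i : Fin 4) : (𝐞 i).imJ = if i = 2 then 1 else 0 := by
  change 𝐞.repr (𝐞 i) 2 = _
  rw [𝐞.repr_self, Finsupp.single_apply]

@[simp]
theorem quaternionBasis_imK (i : Fin 4) : (𝐞 i).imK = if i = 3 then 1 else 0 := by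
  change 𝐞.repr (𝐞 i) 3 = _
  rw [𝐞.repr_self, Finsupp.single_apply]

theorem quaternionGrading_degree (i : Fin 4) :
    quaternionGrading (quaternionDegree i) = ℝ ∙ 𝐞 i := by
  fin_cases i <;> simp [quaternionGrading, quaternionDegree] <;> congr 2 <;> ext <;> simp

theorem quaternionGrading_eq_bot : ∀ α ∉ range quaternionDegree, quaternionGrading α = ⊥ := by
  intro α hα
  unfold quaternionGrading
  split_ifs with h₀ h₁ h₂ h₃
  exacts [(hα ⟨0, h₀.symm⟩).elim, (hα ⟨1, h₁.symm⟩).elim, (hα ⟨2, h₂.symm⟩).elim,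
    (hα ⟨3, h₃.symm⟩).elim, rfl]

theorem quaternionBasis_mul_mem (i j : Fin 4) :
    𝐞 i * 𝐞 j ∈ quaternionGrading (quaternionDegree i + quaternionDegree j) := by
  rw [← quaternionDegree_xor, quaternionGrading_degree, mem_span_singleton]
  fin_cases i <;> fin_cases j
  all_goals first
    | (refine ⟨1, ?_⟩; ext <;> simp +decide; done)
    | (refine ⟨-1, ?_⟩; ext <;> simp +decide)

theorem quaternionBasis_mul_comm (i j : Fin 4) :
    𝐞 i * 𝐞 j = z2Sign ℝ (quaternionDegree i) (quaternionDegree j) • (𝐞 j * 𝐞 i) := by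
  rw [z2Sign, if_congr (quaternionDegree_dot_eq_zero_iff i j) rfl rfl]
  fin_cases i <;> fin_cases j <;> ext <;> simp

/-- The real quaternion algebra `ℍ` is `ℤ₂³`-commutative: the family `quaternionGrading`
is an internal direct sum decomposition of `ℍ` making it a `(ZMod 2)³`-graded `ℝ`-algebra
(`1` lies in the degree-`0` component, and products of homogeneous elements of degrees
`α` and `β` are homogeneous of degree `α + β`), and homogeneous elements `x` of degree
`α` and `y` of degree `β` commute if `⟨α, β⟩ = 0` and anticommute if `⟨α, β⟩ = 1`. -/
theorem quaternion_isZ2pow3Commutative :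
    DirectSum.IsInternal quaternionGrading ∧
    (1 : ℍ[ℝ]) ∈ quaternionGrading 0 ∧
    (∀ (α β : Fin 3 → ZMod 2), ∀ x ∈ quaternionGrading α, ∀ y ∈ quaternionGrading β,
      x * y ∈ quaternionGrading (α + β)) ∧
    (∀ (α β : Fin 3 → ZMod 2), ∀ x ∈ quaternionGrading α, ∀ y ∈ quaternionGrading β,
      ((∑ i, α i * β i) = 0 → x * y = y * x) ∧
      ((∑ i, α i * β i) = 1 → x * y = -(y * x))) := by
  refine ⟨quaternionBasis.isInternal_of_span_singleton quaternionGrading_degree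
      quaternionGrading_eq_bot, ?_,
    fun _ _ _ hx _ hy => mul_mem_of_span_singleton quaternionGrading_degree
      quaternionGrading_eq_bot quaternionBasis_mul_mem hx hy, fun α β x hx y hy => ?_⟩
  · rw [show (0 : Fin 3 → ZMod 2) = quaternionDegree 0 by decide, quaternionGrading_degree]
    exact mem_span_singleton.2 ⟨1, by ext <;> simp⟩
  · have h := mul_eq_smul_mul_rev_of_span_singleton quaternionGrading_degree
      quaternionGrading_eq_bot (z2Sign ℝ) quaternionBasis_mul_comm hx hy
    exact ⟨fun h₀ => by simpa [z2Sign, h₀] using h, fun h₁ => by simpa [z2Sign, h₁] using h⟩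
end

section
/- For every m ∈ ℕ and every symmetric matrix S over ZMod 2 of size m × m, there exists a matrix A ∈ Matrix (Fin (2m)) (Fin m) (ZMod 2) such that S = Aᵀ * A; equivalently, there exist vectors d₁, …, d_m ∈ (ZMod 2)^(2m) such that ⟨dᵢ, dⱼ⟩ = S i j for all i, j. (This realizes every sign rule on m generators as the scalar-product sign rule of ℤ₂ⁿ-degrees with n ≤ 2m.) -/
/-!
Over `ZMod 2` put `c i = 1 + S i i` and `T = S + c cᵀ`; then `T` is symmetric with unit
diagonal, so `T = 1 + N + Nᵀ` for its strictly upper triangular part `N`, and in characteristic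
two `1 + N + Nᵀ = (1 + N)ᵀ (1 + N) + Nᵀ N`. Hence `S = T + c cᵀ` is the Gram matrix of the
rows of `1 + N`, of `N` and of `c`. The last row of `N` vanishes, so `c` can take its place,
and `2m` rows suffice.
-/

open Matrix

namespace Matrix

variable {n R : Type*}

def strictUpper [LT n] [DecidableLT n] [Zero R] (M : Matrix n n R) : Matrix n n R :=
  fun i j => if i < j then M i j else 0

section LinearOrder

variable [LinearOrder n]

lemma strictUpper_row_eq_zero [Zero R] (M : Matrix n n R) {r : n} (hr : ∀ j, j ≤ r) :
    strictUpper M r = 0 := by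
  ext j
  simp [strictUpper, not_lt.2 (hr j)]

lemma IsSymm.eq_diagonal_add_strictUpper_add_transpose [DecidableEq n] [AddCommMonoid R]
    {S : Matrix n n R} (hS : S.IsSymm) :
    S = diagonal S.diag + strictUpper S + (strictUpper S)ᵀ := by
  ext i j
  rcases lt_trichotomy i j with h | rfl | h
  · simp [strictUpper, diagonal, h, h.ne, h.not_gt]
  · simp [strictUpper, diagonal]
  · simp [strictUpper, diagonal, h, h.ne', h.not_gt, hS.apply i j]

end LinearOrder

lemma transpose_mul_self_fromRows {m₁ m₂ : Type*} [Fintype m₁] [Fintype m₂] [CommSemiring R]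
    (A₁ : Matrix m₁ n R) (A₂ : Matrix m₂ n R) :
    (fromRows A₁ A₂)ᵀ * fromRows A₁ A₂ = A₁ᵀ * A₁ + A₂ᵀ * A₂ := by
  rw [transpose_fromRows, fromCols_mul_fromRows]

lemma transpose_mul_self_updateRow_of_row_eq_zero {m : Type*} [Fintype m] [DecidableEq m]
    [CommSemiring R] (M : Matrix m n R) {r : m} (hr : M r = 0) (c : n → R) :
    (M.updateRow r c)ᵀ * M.updateRow r c = Mᵀ * M + vecMulVec c c := by
  ext i j
  have hterm : ∀ k, M.updateRow r c k i * M.updateRow r c k j =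
      M k i * M k j + if k = r then c i * c j else 0 := by
    intro k
    by_cases hk : k = r
    · subst hk; simp [hr]
    · simp [hk]
  simp [mul_apply, vecMulVec_apply, hterm, Finset.sum_add_distrib]

lemma transpose_one_add_mul_one_add_add_transpose_mul_self [Fintype n] [DecidableEq n]
    [CommRing R] [CharP R 2] (N : Matrix n n R) :
    (1 + N)ᵀ * (1 + N) + Nᵀ * N = 1 + N + Nᵀ := by
  have hN : Nᵀ * N + Nᵀ * N = 0 := by
    ext i j
    exact CharTwo.add_self_eq_zero _
  calc (1 + N)ᵀ * (1 + N) + Nᵀ * N = 1 + N + Nᵀ + (Nᵀ * N + Nᵀ * N) := by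
        rw [transpose_add, transpose_one, add_mul, mul_add, mul_add, one_mul, mul_one, one_mul]
        abel
    _ = 1 + N + Nᵀ := by rw [hN, add_zero]

theorem IsSymm.exists_eq_transpose_mul_self [Fintype n] [LinearOrder n]
    {S : Matrix n n (ZMod 2)} (hS : S.IsSymm) :
    ∃ A : Matrix (n ⊕ n) n (ZMod 2), S = Aᵀ * A := by
  rcases isEmpty_or_nonempty n with hn | hn
  · exact ⟨0, Subsingleton.elim _ _⟩
  obtain ⟨r, hr⟩ : ∃ r : n, ∀ j, j ≤ r :=
    ⟨Finset.univ.max' Finset.univ_nonempty, fun j => Finset.le_max' _ j (Finset.mem_univ j)⟩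
  set c : n → ZMod 2 := fun i => 1 + S i i
  set T := S + vecMulVec c c
  have hT : T.IsSymm := hS.add (transpose_vecMulVec c c)
  have hTdiag : diagonal T.diag = 1 := by
    rw [← diagonal_one]
    congr
    ext i
    change S i i + (1 + S i i) * (1 + S i i) = 1
    generalize S i i = a
    revert a
    decide
  set N := strictUpper T
  refine ⟨fromRows (1 + N) (N.updateRow r c), ?_⟩
  rw [transpose_mul_self_fromRows,
    transpose_mul_self_updateRow_of_row_eq_zero N (strictUpper_row_eq_zero T hr), ← add_assoc,
    transpose_one_add_mul_one_add_add_transpose_mul_self, ← hTdiag,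
    ← hT.eq_diagonal_add_strictUpper_add_transpose]
  ext i j
  simp only [T, add_apply, add_assoc, CharTwo.add_self_eq_zero, add_zero]

end Matrix

/-- Every sign rule on `m` generators, i.e. every symmetric `m × m` matrix `S` over
`ZMod 2`, is realized as the scalar-product sign rule of `ℤ₂ⁿ`-degrees with `n = 2 * m`:
there is a matrix `A` of size `2m × m` over `ZMod 2` with `S = Aᵀ * A`; the columns
`dᵢ = A · i` of `A` are vectors in `(ZMod 2)^(2m)` with `⟨dᵢ, dⱼ⟩ = S i j`. -/
theorem sign_rule_is_scalar_product_rule (m : ℕ) (S : Matrix (Fin m) (Fin m) (ZMod 2))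
    (hS : S.IsSymm) :
    ∃ A : Matrix (Fin (2 * m)) (Fin m) (ZMod 2),
      S = Aᵀ * A ∧ ∀ i j : Fin m, (∑ k : Fin (2 * m), A k i * A k j) = S i j := by
  obtain ⟨B, hB⟩ := hS.exists_eq_transpose_mul_self
  let e : Fin (2 * m) ≃ Fin m ⊕ Fin m := (finCongr (two_mul m)).trans finSumFinEquiv.symm
  have hA : S = (B.submatrix e id)ᵀ * B.submatrix e id := by
    rw [transpose_submatrix, submatrix_mul_equiv, hB, submatrix_id_id]
  exact ⟨B.submatrix e id, hA, fun i j => by rw [hA, mul_apply]; rfl⟩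
end

section
/- Let R be a commutative ring, q ∈ ℕ, and let J be the ideal of the formal power series ring R[[ξ₁,…,ξ_q]] = MvPowerSeries (Fin q) R consisting of the power series with zero constant term. Then for every k ∈ ℕ, the residue classes modulo J^{k+2} of the monomials ξ^μ with |μ| = k+1 form a basis of the R-module J^{k+1}/J^{k+2}; in particular, J^{k+1}/J^{k+2} is a free R-module of rank equal to the number of multi-indices μ ∈ ℕ^q with |μ| = k+1, and J/J² is free with basis the classes of ξ₁,…,ξ_q. -/
/-!
The powers of `J = ker constantCoeff` are the order filtration: `J ^ n` consists of the power
series of order at least `n`. One inclusion is `order (f * g) ≥ order f + order g`; for the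
other, with finitely many variables, every exponent `ν` with `|ν| ≥ n` has a divisor `μ ≤ ν`
with `|μ| = n`, and grouping the terms of `f` by a chosen such divisor writes
`f = ∑_{|μ| = n} ξ^μ g_μ`. Consequently an element of `J ^ n` is congruent modulo `J ^ (n + 1)`
to its homogeneous part of degree `n`, and that part vanishes modulo `J ^ (n + 1)` only if all
its coefficients do, so the monomials of degree `n` form a basis of `J ^ n / J ^ (n + 1)`.
-/

instance Finsupp.finite_degree_eq {σ : Type*} [Finite σ] (n : ℕ) :
    Finite {μ : σ →₀ ℕ // μ.degree = n} :=
  Finsupp.finite_of_degree_eq n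

noncomputable def Finsupp.degreeEqOneEquiv (σ : Type*) : σ ≃ {μ : σ →₀ ℕ // μ.degree = 1} :=
  (Equiv.ofInjective _ (Finsupp.single_left_injective one_ne_zero)).trans
    (Equiv.setCongr Finsupp.range_single_one)

namespace MvPowerSeries

open Finsupp

section Order

variable {σ R : Type*} [CommSemiring R]

theorem le_order_of_mem_ker_constantCoeff_pow {f : MvPowerSeries σ R} {n : ℕ}
    (hf : f ∈ RingHom.ker constantCoeff ^ n) : n ≤ f.order := by
  induction n generalizing f with
  | zero => simp
  | succ n ih =>
    rw [pow_succ] at hf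
    refine Submodule.mul_induction_on hf (fun a ha b hb => ?_) (fun a b ha hb => ?_)
    · calc ((n + 1 : ℕ) : ℕ∞) = n + 1 := by push_cast; rfl
        _ ≤ a.order + b.order := add_le_add (ih ha) (one_le_order_iff_constCoeff_eq_zero.2 hb)
        _ ≤ (a * b).order := le_order_mul
    · exact (le_min ha hb).trans min_order_le_add

theorem monomial_one_mem_ker_constantCoeff_pow (μ : σ →₀ ℕ) :
    monomial μ (1 : R) ∈ RingHom.ker constantCoeff ^ μ.degree := by
  induction μ using Finsupp.induction with
  | zero => simp
  | single_add i k μ _ _ ih =>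
    rw [← mul_one (1 : R), ← monomial_mul_monomial, ← X_pow_eq, map_add, degree_single, pow_add]
    exact Ideal.mul_mem_mul (Ideal.pow_mem_pow (by simp) k) ih

theorem mem_ker_constantCoeff_pow_of_le_order [Finite σ] {f : MvPowerSeries σ R} {n : ℕ}
    (hf : n ≤ f.order) : f ∈ RingHom.ker constantCoeff ^ n := by
  classical
  have hlead : ∀ ν : σ →₀ ℕ, ∃ μ ≤ ν, n ≤ ν.degree → μ.degree = n := fun ν =>
    if h : n ≤ ν.degree then (exists_le_degree_eq ν n h).imp fun _ hμ => ⟨hμ.1, fun _ => hμ.2⟩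
    else ⟨0, zero_le, fun h' => absurd h' h⟩
  choose lead lead_le degree_lead using hlead
  set S := (finite_of_degree_eq (σ := σ) n).toFinset
  -- `g μ` collects the terms of `f` whose chosen divisor `lead` is `μ`, divided by `ξ^μ`.
  let g : (σ →₀ ℕ) → MvPowerSeries σ R := fun μ d =>
    if lead (μ + d) = μ then coeff (μ + d) f else 0
  have hfg : f = ∑ μ ∈ S, monomial μ 1 * g μ := by
    ext ν
    simp only [map_sum, coeff_monomial_mul, one_mul]
    have hterm : ∀ μ, (if μ ≤ ν then coeff (ν - μ) (g μ) else 0) =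
        if lead ν = μ then coeff ν f else 0 := by
      intro μ
      by_cases hμ : μ ≤ ν
      · rw [if_pos hμ, coeff_apply]
        dsimp only [g]
        rw [add_tsub_cancel_of_le hμ]
      · rw [if_neg hμ, if_neg fun h : lead ν = μ => hμ (h ▸ lead_le ν)]
    rw [Finset.sum_congr rfl fun μ _ => hterm μ, Finset.sum_ite_eq]
    by_cases hν : n ≤ ν.degree
    · rw [if_pos (by simpa [S] using degree_lead ν hν)]
    · rw [coeff_of_lt_order (lt_of_lt_of_le (by exact_mod_cast not_le.1 hν) hf), ite_self]
  rw [hfg]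
  refine Ideal.sum_mem _ fun μ hμ => Ideal.mul_mem_right _ _ ?_
  rw [Set.Finite.mem_toFinset] at hμ
  exact hμ ▸ monomial_one_mem_ker_constantCoeff_pow μ

theorem coeff_sum_smul_monomial_one {p : (σ →₀ ℕ) → Prop} [Fintype (Subtype p)]
    (c : Subtype p → R) (μ : Subtype p) :
    coeff μ.1 (∑ ν, c ν • monomial ν.1 (1 : R)) = c μ := by
  classical
  rw [map_sum, Fintype.sum_eq_single μ fun ν hν => ?_]
  · simp
  · simp [coeff_monomial, Subtype.val_injective.ne hν.symm]

theorem sum_smul_monomial_one_mem_ker_constantCoeff_pow {n : ℕ}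
    [Fintype {μ : σ →₀ ℕ // μ.degree = n}] (c : {μ : σ →₀ ℕ // μ.degree = n} → R) :
    ∑ μ, c μ • monomial μ.1 (1 : R) ∈ RingHom.ker constantCoeff ^ n :=
  Ideal.sum_mem _ fun μ _ => Submodule.smul_of_tower_mem _ _ <| by
    simpa only [μ.2] using monomial_one_mem_ker_constantCoeff_pow (R := R) μ.1

end Order

section Graded

variable (σ R : Type*) [CommRing R] (n : ℕ)

local notation "𝔪" => RingHom.ker (constantCoeff : MvPowerSeries σ R →+* R)

noncomputable def mkMonomial (μ : {μ : σ →₀ ℕ // μ.degree = n}) :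
    ((𝔪 ^ n).map (Ideal.Quotient.mk (𝔪 ^ (n + 1)))).restrictScalars R :=
  ⟨Ideal.Quotient.mk _ (monomial μ.1 1),
    Ideal.mem_map_of_mem _ <| by
      simpa only [μ.2] using monomial_one_mem_ker_constantCoeff_pow (R := R) μ.1⟩

theorem coe_sum_smul_mkMonomial [Fintype {μ : σ →₀ ℕ // μ.degree = n}]
    (c : {μ : σ →₀ ℕ // μ.degree = n} → R) :
    ((∑ μ, c μ • mkMonomial σ R n μ :
        ((𝔪 ^ n).map (Ideal.Quotient.mk (𝔪 ^ (n + 1)))).restrictScalars R) :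
      MvPowerSeries σ R ⧸ 𝔪 ^ (n + 1)) =
      Ideal.Quotient.mk _ (∑ μ, c μ • monomial μ.1 (1 : R)) := by
  rw [← Ideal.Quotient.mkₐ_eq_mk R, map_sum]
  simp [mkMonomial, map_smul]

variable [Finite σ]

theorem linearIndependent_mkMonomial : LinearIndependent R (mkMonomial σ R n) := by
  have := Fintype.ofFinite {μ : σ →₀ ℕ // μ.degree = n}
  rw [Fintype.linearIndependent_iff]
  intro c hc μ
  have hmem : ∑ ν, c ν • monomial ν.1 (1 : R) ∈ 𝔪 ^ (n + 1) := by
    rw [← Ideal.Quotient.eq_zero_iff_mem, ← coe_sum_smul_mkMonomial, hc, Submodule.coe_zero]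
  rw [← coeff_sum_smul_monomial_one c μ]
  refine coeff_of_lt_order ((le_order_of_mem_ker_constantCoeff_pow hmem).trans_lt' ?_)
  rw [μ.2]
  exact_mod_cast n.lt_succ_self

theorem span_range_mkMonomial : Submodule.span R (Set.range (mkMonomial σ R n)) = ⊤ := by
  have := Fintype.ofFinite {μ : σ →₀ ℕ // μ.degree = n}
  refine eq_top_iff.2 fun x _ => Submodule.mem_span_range_iff_exists_fun R |>.2 ?_
  obtain ⟨f, hf, hfx⟩ := (Ideal.mem_map_iff_of_surjective _ Ideal.Quotient.mk_surjective).1 x.2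
  have hsub : f - ∑ μ : {μ : σ →₀ ℕ // μ.degree = n}, coeff μ.1 f • monomial μ.1 (1 : R) ∈
      𝔪 ^ (n + 1) := by
    refine mem_ker_constantCoeff_pow_of_le_order (nat_le_order fun ν hν => ?_)
    rw [map_sub]
    rcases (Nat.lt_succ_iff.1 hν).lt_or_eq with hlt | heq
    · have hlt' : (ν.degree : ℕ∞) < n := by exact_mod_cast hlt
      rw [coeff_of_lt_order (hlt'.trans_le (le_order_of_mem_ker_constantCoeff_pow hf)),
        coeff_of_lt_order (hlt'.trans_le (le_order_of_mem_ker_constantCoeff_pow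
          (sum_smul_monomial_one_mem_ker_constantCoeff_pow _))), sub_zero]
    · exact sub_eq_zero.2 (coeff_sum_smul_monomial_one (fun μ => coeff μ.1 f) ⟨ν, heq⟩).symm
  refine ⟨fun μ => coeff μ.1 f, Subtype.ext ?_⟩
  rw [coe_sum_smul_mkMonomial, ← hfx]
  exact (Ideal.Quotient.eq.2 hsub).symm

noncomputable def basisPowQuotPowSucc : Module.Basis {μ : σ →₀ ℕ // μ.degree = n} R
    (((𝔪 ^ n).map (Ideal.Quotient.mk (𝔪 ^ (n + 1)))).restrictScalars R) :=
  Module.Basis.mk (linearIndependent_mkMonomial σ R n) (span_range_mkMonomial σ R n).ge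

theorem coe_basisPowQuotPowSucc_apply (μ : {μ : σ →₀ ℕ // μ.degree = n}) :
    (basisPowQuotPowSucc σ R n μ : MvPowerSeries σ R ⧸ 𝔪 ^ (n + 1)) =
      Ideal.Quotient.mk _ (monomial μ.1 1) := by
  rw [basisPowQuotPowSucc, Module.Basis.mk_apply]
  rfl

noncomputable def basisQuotSq :
    Module.Basis σ R (((𝔪).map (Ideal.Quotient.mk (𝔪 ^ 2))).restrictScalars R) :=
  ((basisPowQuotPowSucc σ R 1).map (LinearEquiv.ofEq _ _ (by rw [pow_one]))).reindex
    (Finsupp.degreeEqOneEquiv σ).symm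

theorem coe_basisQuotSq_apply (i : σ) :
    (basisQuotSq σ R i : MvPowerSeries σ R ⧸ 𝔪 ^ 2) = Ideal.Quotient.mk _ (X i) := by
  rw [basisQuotSq, Module.Basis.reindex_apply, Equiv.symm_symm, Module.Basis.map_apply]
  exact coe_basisPowQuotPowSucc_apply σ R 1 _

end Graded

end MvPowerSeries

/-- Let `J` be the ideal of `R[[ξ₁, …, ξ_q]] = MvPowerSeries (Fin q) R` of power series
with zero constant term.  For every `k`, the classes modulo `J ^ (k + 2)` of the monomials
`ξ^μ` with `|μ| = k + 1` form a basis of the `R`-module `J^(k+1)/J^(k+2)` (realized as the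
image of `J ^ (k + 1)` in the quotient ring `R[[ξ]]/J^(k+2)`); in particular this module
is free of rank the number of multi-indices `μ` with `|μ| = k + 1`.  Moreover `J/J²` is
free with basis the classes of `ξ₁, …, ξ_q`. -/
theorem augmentation_quotients_free (R : Type*) [CommRing R] (q : ℕ)
    (J : Ideal (MvPowerSeries (Fin q) R))
    (hJ : J = RingHom.ker ((MvPowerSeries.constantCoeff : MvPowerSeries (Fin q) R →+* R))) :
    (∀ k : ℕ,
      ∃ b : Module.Basis {μ : Fin q →₀ ℕ // (μ.sum fun _ n => n) = k + 1} R
        (Submodule.restrictScalars R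
          ((J ^ (k + 1)).map (Ideal.Quotient.mk (J ^ (k + 2))))),
        ∀ μ, (b μ : MvPowerSeries (Fin q) R ⧸ J ^ (k + 2)) =
          Ideal.Quotient.mk (J ^ (k + 2)) ((MvPowerSeries.monomial μ.1 (1 : R)))) ∧
    ∃ b : Module.Basis (Fin q) R
      (Submodule.restrictScalars R (J.map (Ideal.Quotient.mk (J ^ 2)))),
      ∀ i, (b i : MvPowerSeries (Fin q) R ⧸ J ^ 2) =
        Ideal.Quotient.mk (J ^ 2) (MvPowerSeries.X i) := by
  subst hJ
  -- `Finsupp.degree μ` unfolds to `μ.sum fun _ n => n`, so the index types agree.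
  exact ⟨fun k => ⟨_, MvPowerSeries.coe_basisPowQuotPowSucc_apply (Fin q) R (k + 1)⟩,
    _, MvPowerSeries.coe_basisQuotSq_apply (Fin q) R⟩
end

section
/- Let U ⊆ ℝ^p be open, let C^∞(U) be the ℝ-algebra of smooth real-valued functions on U, and let B = MvPowerSeries (Fin q) (C^∞(U)) be the algebra of formal power series in ξ₁,…,ξ_q with coefficients in C^∞(U). Let φ, ψ : C^∞(U) → B be ℝ-algebra homomorphisms that are local in the sense that for every x₀ ∈ U and every g ∈ C^∞(U) with g(x₀) = 0, the constant coefficients of φ(g) and of ψ(g) vanish at x₀. If φ(P|_U) = ψ(P|_U) for every polynomial P ∈ ℝ[x₁,…,x_p], then φ = ψ. (A local algebra morphism from smooth functions into a formal power series algebra is determined by its values on polynomials.) -/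
open scoped Classical

/-- The commutative `ℝ`-algebra `C^∞(U)` of smooth real-valued functions on an open set
`U ⊆ ℝ^p`, realized as a subalgebra of the algebra of all functions `U → ℝ`:
a function belongs to it iff its extension by `0` is `C^∞` on `U`
(for `U` open this does not depend on the chosen extension). -/
noncomputable def smoothFunctions (p : ℕ) (U : Set (Fin p → ℝ)) : Subalgebra ℝ (U → ℝ) where
  carrier := {f | ContDiffOn ℝ (⊤ : ℕ∞)
    (fun x : Fin p → ℝ => if h : x ∈ U then f ⟨x, h⟩ else 0) U}
  mul_mem' := fun hf hg => (hf.mul hg).congr fun x hx => by simp [hx]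
  one_mem' := (contDiffOn_const (c := (1 : ℝ))).congr fun x hx => by simp [hx]
  add_mem' := fun hf hg => (hf.add hg).congr fun x hx => by simp [hx]
  zero_mem' := (contDiffOn_const (c := (0 : ℝ))).congr fun x hx => by simp [hx]
  algebraMap_mem' := fun r => (contDiffOn_const (c := r)).congr fun x hx => by simp [hx]

/-!
Evaluating coefficients at a point `x₀ ∈ U` turns `φ` and `ψ` into ring maps
`C^∞(U) → ℝ[[ξ]]` sending the ideal `𝔪 = {g | g x₀ = 0}` to series without constant term.
By Hadamard's lemma, made global with a bump function, every smooth `f` is congruent modulo `𝔪²`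
to a polynomial, on which the two maps agree. Since
`φ (g h) - ψ (g h) = φ g * (φ h - ψ h) + (φ g - ψ g) * ψ h`, agreement up to order `k` on all of
`C^∞(U)` gives agreement up to order `k + 1` on `𝔪²`, hence everywhere; so the maps agree to all
orders.
-/

open scoped ContDiff Topology

open Metric Set

universe u

namespace MvPowerSeries

variable {σ A S : Type*} [CommRing A] [CommRing S] {φ ψ : A →+* MvPowerSeries σ S} {I : Ideal A}

theorem le_order_sub_of_forall_exists_sub_mem_sq
    (hφ : ∀ a ∈ I, constantCoeff (φ a) = 0) (hψ : ∀ a ∈ I, constantCoeff (ψ a) = 0)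
    (hI : ∀ a, ∃ b, φ b = ψ b ∧ a - b ∈ I ^ 2) (k : ℕ) (a : A) :
    (k : ℕ∞) ≤ (φ a - ψ a).order := by
  induction k generalizing a with
  | zero => exact bot_le
  | succ k ih =>
    obtain ⟨b, hb, hab⟩ := hI a
    have hsub : φ a - ψ a = φ (a - b) - ψ (a - b) := by simp only [map_sub, hb]; ring
    rw [hsub]
    rw [pow_two] at hab
    refine Submodule.mul_induction_on hab (fun m hm n hn => ?_) (fun x y hx hy => ?_)
    · have hmn : φ (m * n) - ψ (m * n) = φ m * (φ n - ψ n) + (φ m - ψ m) * ψ n := by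
        simp only [map_mul]; ring
      have h₁ := one_le_order_iff_constCoeff_eq_zero.mpr (hφ m hm)
      have h₂ := one_le_order_iff_constCoeff_eq_zero.mpr (hψ n hn)
      rw [hmn]
      calc ((k + 1 : ℕ) : ℕ∞) ≤ min (1 + k) (k + 1) := by simp [add_comm]
        _ ≤ min ((φ m).order + (φ n - ψ n).order) ((φ m - ψ m).order + (ψ n).order) :=
          min_le_min (add_le_add h₁ (ih n)) (add_le_add (ih m) h₂)
        _ ≤ _ := (min_le_min le_order_mul le_order_mul).trans min_order_le_add
    · have hxy : φ (x + y) - ψ (x + y) = (φ x - ψ x) + (φ y - ψ y) := by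
        simp only [map_add]; ring
      exact hxy ▸ (le_min hx hy).trans min_order_le_add

theorem ringHom_ext_of_forall_exists_sub_mem_sq
    (hφ : ∀ a ∈ I, constantCoeff (φ a) = 0) (hψ : ∀ a ∈ I, constantCoeff (ψ a) = 0)
    (hI : ∀ a, ∃ b, φ b = ψ b ∧ a - b ∈ I ^ 2) : φ = ψ := by
  ext1 a
  rw [← sub_eq_zero, ← order_eq_top_iff, ENat.eq_top_iff_forall_ge]
  exact fun k => le_order_sub_of_forall_exists_sub_mem_sq hφ hψ hI k a

end MvPowerSeries

section ParametricIntegral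

-- One universe for `E` and `F`: the induction below replaces `F` by `E →L[ℝ] F`.
variable {E F : Type u} [NormedAddCommGroup E] [NormedSpace ℝ E] [ProperSpace E]
  [NormedAddCommGroup F] [NormedSpace ℝ F]

theorem hasFDerivAt_intervalIntegral_of_contDiff {H : ℝ × E → F} (hH : ContDiff ℝ 1 H)
    (a b : ℝ) (x₀ : E) :
    HasFDerivAt (fun x => ∫ t in a..b, H (t, x))
      (∫ t in a..b, (fderiv ℝ H (t, x₀)).comp (ContinuousLinearMap.inr ℝ ℝ E)) x₀ := by
  have hH' : Continuous fun y => (fderiv ℝ H y).comp (ContinuousLinearMap.inr ℝ ℝ E) :=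
    (hH.continuous_fderiv one_ne_zero).clm_comp continuous_const
  obtain ⟨C, hC⟩ := (isCompact_uIcc.prod (isCompact_closedBall x₀ 1)).exists_bound_of_continuousOn
    hH'.continuousOn
  refine intervalIntegral.hasFDerivAt_integral_of_dominated_of_fderiv_le (𝕜 := ℝ)
    (μ := MeasureTheory.volume) (F := fun x t => H (t, x))
    (F' := fun x t => (fderiv ℝ H (t, x)).comp (ContinuousLinearMap.inr ℝ ℝ E))
    (bound := fun _ => C) (ball_mem_nhds x₀ one_pos) ?_ ?_ ?_ ?_ intervalIntegrable_const ?_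
  · exact .of_forall fun x => (hH.continuous.comp (by fun_prop)).aestronglyMeasurable
  · exact (hH.continuous.comp (by fun_prop)).intervalIntegrable _ _
  · exact (hH'.comp (by fun_prop)).aestronglyMeasurable
  · exact .of_forall fun t ht x hx =>
      hC (t, x) ⟨uIoc_subset_uIcc ht, ball_subset_closedBall hx⟩
  · exact .of_forall fun t _ x _ =>
      ((hH.differentiable one_ne_zero (t, x)).hasFDerivAt).comp x (hasFDerivAt_prodMk_right t x)

theorem contDiff_intervalIntegral_of_contDiff {n : ℕ} {H : ℝ × E → F} (hH : ContDiff ℝ n H)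
    (a b : ℝ) : ContDiff ℝ n fun x => ∫ t in a..b, H (t, x) := by
  induction n generalizing F with
  | zero =>
    exact contDiff_zero.mpr <|
      intervalIntegral.continuous_parametric_intervalIntegral_of_continuous'
        (f := fun x t => H (t, x)) (hH.continuous.comp continuous_swap) a b
  | succ n ih =>
    have hderiv := hasFDerivAt_intervalIntegral_of_contDiff (hH.of_le (by simp)) a b
    rw [Nat.cast_add_one, contDiff_succ_iff_fderiv]
    refine ⟨fun x => (hderiv x).differentiableAt, by simp, ?_⟩
    rw [funext fun x => (hderiv x).fderiv]
    exact ih ((hH.fderiv_right (by simp)).clm_comp contDiff_const)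

theorem contDiff_infty_intervalIntegral_of_contDiff {H : ℝ × E → F} (hH : ContDiff ℝ ∞ H)
    (a b : ℝ) : ContDiff ℝ ∞ fun x => ∫ t in a..b, H (t, x) :=
  contDiff_infty.mpr fun _ => contDiff_intervalIntegral_of_contDiff (hH.of_le (mod_cast le_top)) a b

theorem ContDiff.exists_eq_add_apply_sub [CompleteSpace F] {f : E → F} (hf : ContDiff ℝ ∞ f)
    (x₀ : E) :
    ∃ g : E → E →L[ℝ] F, ContDiff ℝ ∞ g ∧ ∀ x, f x = f x₀ + g x (x - x₀) := by
  have hdf : ContDiff ℝ ∞ (fderiv ℝ f) := hf.fderiv_right (mod_cast le_top)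
  refine ⟨fun x => ∫ t in (0 : ℝ)..1, fderiv ℝ f (x₀ + t • (x - x₀)),
    contDiff_infty_intervalIntegral_of_contDiff
      (hdf.comp (f := fun y : ℝ × E => x₀ + y.1 • (y.2 - x₀)) (by fun_prop)) 0 1, fun x => ?_⟩
  have htaylor := map_add_eq_sum_add_integral_iteratedFDeriv (n := 0) (x := x₀) (y := x - x₀)
    fun t _ => hf.contDiffAt.of_le (mod_cast le_top)
  simp only [zero_add, Finset.range_one, Finset.sum_singleton, Nat.factorial_zero, Nat.cast_one,
    inv_one, iteratedFDeriv_zero_apply, one_smul, pow_zero, add_sub_cancel, Nat.reduceAdd,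
    iteratedFDeriv_one_apply] at htaylor
  have hint : IntervalIntegrable (fun t : ℝ => fderiv ℝ f (x₀ + t • (x - x₀)))
      MeasureTheory.volume 0 1 :=
    (hdf.continuous.comp (f := fun t : ℝ => x₀ + t • (x - x₀)) (by fun_prop)).intervalIntegrable 0 1
  rw [htaylor, ContinuousLinearMap.intervalIntegral_apply hint]

end ParametricIntegral

theorem ContDiffOn.contDiff_mul_of_tsupport_subset {𝕜 E : Type*} [NontriviallyNormedField 𝕜]
    [NormedAddCommGroup E] [NormedSpace 𝕜 E] {n : WithTop ℕ∞} {U : Set E} {f χ : E → 𝕜}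
    (hf : ContDiffOn 𝕜 n f U) (hU : IsOpen U) (hχ : ContDiff 𝕜 n χ) (hsupp : tsupport χ ⊆ U) :
    ContDiff 𝕜 n fun x => χ x * f x := by
  refine contDiff_iff_contDiffAt.mpr fun x => ?_
  by_cases hx : x ∈ U
  · exact hχ.contDiffAt.mul (hf.contDiffAt (hU.mem_nhds hx))
  · have hχx : χ =ᶠ[𝓝 x] 0 := notMem_tsupport_iff_eventuallyEq.mp fun h => hx (hsupp h)
    exact (contDiffAt_const (c := 0)).congr_of_eventuallyEq <| by
      filter_upwards [hχx] with y hy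
      rw [hy, Pi.zero_apply, zero_mul]

namespace smoothFunctions

variable {p : ℕ} {U : Set (Fin p → ℝ)}

noncomputable def ofContDiffOn (f : (Fin p → ℝ) → ℝ) (hf : ContDiffOn ℝ ∞ f U) :
    smoothFunctions p U :=
  ⟨fun x => f x, hf.congr fun x hx => by simp [hx]⟩

@[simp]
theorem coe_ofContDiffOn (f : (Fin p → ℝ) → ℝ) (hf : ContDiffOn ℝ ∞ f U) :
    (ofContDiffOn f hf : U → ℝ) = fun x : U => f x :=
  rfl

noncomputable def evalAt (x : U) : smoothFunctions p U →ₐ[ℝ] ℝ :=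
  (Pi.evalAlgHom ℝ (fun _ : U => ℝ) x).comp (smoothFunctions p U).val

@[simp]
theorem evalAt_apply (x : U) (f : smoothFunctions p U) : evalAt x f = (f : U → ℝ) x :=
  rfl

theorem ext_evalAt {f g : smoothFunctions p U} (h : ∀ x, evalAt x f = evalAt x g) : f = g :=
  Subtype.ext (funext h)

noncomputable def coord (i : Fin p) : smoothFunctions p U :=
  ofContDiffOn (fun x => x i) (contDiff_apply ℝ ℝ i).contDiffOn

theorem evalAt_aeval_coord (x : U) (P : MvPolynomial (Fin p) ℝ) :
    evalAt x (MvPolynomial.aeval coord P) = MvPolynomial.eval (x : Fin p → ℝ) P := by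
  rw [MvPolynomial.comp_aeval_apply]
  rfl

theorem sub_algebraMap_evalAt_mem_ker (x : U) (f : smoothFunctions p U) :
    f - algebraMap ℝ _ (evalAt x f) ∈ RingHom.ker (evalAt x) := by
  simp [RingHom.mem_ker]

theorem mem_ker_evalAt_sq_of_eventually_eq_zero {f : smoothFunctions p U} {x₀ : U}
    (hf : ∀ᶠ x in 𝓝 x₀, (f : U → ℝ) x = 0) : f ∈ RingHom.ker (evalAt x₀) ^ 2 := by
  rw [nhds_subtype_eq_comap, Filter.eventually_comap] at hf
  obtain ⟨χ, hχU, -, hχ, -, hχx₀⟩ := exists_contDiff_tsupport_subset (n := ⊤) hf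
  let c := ofContDiffOn (U := U) (fun y => 1 - χ y) (contDiff_const.sub hχ).contDiffOn
  have hcf : f = c * f := ext_evalAt fun x => by
    by_cases hx : χ x = 0
    · simp [c, hx]
    · simp [hχU (subset_tsupport _ hx) x rfl]
  rw [hcf, pow_two]
  exact Ideal.mul_mem_mul (by simp [c, RingHom.mem_ker, hχx₀])
    (by simpa [RingHom.mem_ker] using hf.self_of_nhds x₀ rfl)

open MvPolynomial in
theorem exists_ofContDiffOn_sub_aeval_coord_mem_ker_evalAt_sq {F : (Fin p → ℝ) → ℝ}
    (hF : ContDiff ℝ ∞ F) (x₀ : U) :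
    ∃ P : MvPolynomial (Fin p) ℝ,
      ofContDiffOn F hF.contDiffOn - aeval coord P ∈ RingHom.ker (evalAt x₀) ^ 2 := by
  obtain ⟨g, hg, hFg⟩ := hF.exists_eq_add_apply_sub (x₀ : Fin p → ℝ)
  let e : Fin p → Fin p → ℝ := fun i j => if i = j then 1 else 0
  let gᵢ : Fin p → smoothFunctions p U := fun i =>
    ofContDiffOn (fun y => g y (e i)) (hg.clm_apply contDiff_const).contDiffOn
  refine ⟨C (F x₀) + ∑ i, C (g x₀ (e i)) * (X i - C ((x₀ : Fin p → ℝ) i)), ?_⟩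
  have hdecomp : ofContDiffOn F hF.contDiffOn - aeval coord
      (C (F x₀) + ∑ i, C (g x₀ (e i)) * (X i - C ((x₀ : Fin p → ℝ) i))) =
      ∑ i, (coord i - algebraMap ℝ _ (evalAt x₀ (coord i))) *
        (gᵢ i - algebraMap ℝ _ (evalAt x₀ (gᵢ i))) := by
    refine ext_evalAt fun x => ?_
    have hg_coord := (g x : (Fin p → ℝ) →ₗ[ℝ] ℝ).pi_apply_eq_sum_univ (x - x₀)
    rw [ContinuousLinearMap.coe_coe] at hg_coord
    rw [map_sub, evalAt_aeval_coord]
    simp only [map_add, map_sum, map_mul, map_sub, eval_C, eval_X, AlgHom.commutes,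
      Algebra.algebraMap_self, RingHom.id_apply, evalAt_apply, coe_ofContDiffOn, coord, gᵢ,
      hFg x, hg_coord, Pi.sub_apply, smul_eq_mul]
    rw [← sub_sub, add_sub_cancel_left, ← Finset.sum_sub_distrib]
    exact Finset.sum_congr rfl fun i _ => by ring
  rw [hdecomp, pow_two]
  exact Ideal.sum_mem _ fun i _ => Ideal.mul_mem_mul (sub_algebraMap_evalAt_mem_ker _ _)
    (sub_algebraMap_evalAt_mem_ker _ _)

theorem exists_contDiff_sub_ofContDiffOn_mem_ker_evalAt_sq (hU : IsOpen U)
    (f : smoothFunctions p U) (x₀ : U) :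
    ∃ (F : (Fin p → ℝ) → ℝ) (hF : ContDiff ℝ ∞ F),
      f - ofContDiffOn F hF.contDiffOn ∈ RingHom.ker (evalAt x₀) ^ 2 := by
  obtain ⟨ε, hε, hεU⟩ := Metric.nhds_basis_closedBall.mem_iff.mp (hU.mem_nhds x₀.2)
  let χ : ContDiffBump (x₀ : Fin p → ℝ) := ⟨ε / 2, ε, half_pos hε, half_lt_self hε⟩
  have hf : ContDiffOn ℝ ∞ (fun x => if h : x ∈ U then (f : U → ℝ) ⟨x, h⟩ else 0) U := f.2
  have hF := hf.contDiff_mul_of_tsupport_subset hU χ.contDiff (χ.tsupport_eq ▸ hεU)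
  refine ⟨_, hF, mem_ker_evalAt_sq_of_eventually_eq_zero ?_⟩
  filter_upwards [continuous_subtype_val.continuousAt.eventually
    (Metric.closedBall_mem_nhds (x₀ : Fin p → ℝ) (half_pos hε))] with x hx
  simp [χ.one_of_mem_closedBall hx]

open MvPolynomial in
theorem exists_sub_aeval_coord_mem_ker_evalAt_sq (hU : IsOpen U) (f : smoothFunctions p U)
    (x₀ : U) : ∃ P : MvPolynomial (Fin p) ℝ, f - aeval coord P ∈ RingHom.ker (evalAt x₀) ^ 2 := by
  obtain ⟨F, hF, hfF⟩ := exists_contDiff_sub_ofContDiffOn_mem_ker_evalAt_sq hU f x₀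
  obtain ⟨P, hFP⟩ := exists_ofContDiffOn_sub_aeval_coord_mem_ker_evalAt_sq hF x₀
  exact ⟨P, sub_add_sub_cancel f _ _ ▸ add_mem hfF hFP⟩

end smoothFunctions

/-- A local `ℝ`-algebra morphism from `C^∞(U)`, `U ⊆ ℝ^p` open, to the algebra of formal
power series `C^∞(U)[[ξ₁, …, ξ_q]]` is determined by its values on (restrictions to `U`
of) polynomials: if two such morphisms `φ, ψ` — local in the sense that whenever
`g x₀ = 0` the constant coefficients of `φ g` and `ψ g` vanish at `x₀` — agree on all
polynomials, then `φ = ψ`. -/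
theorem local_algHom_determined_by_polynomials
    (p q : ℕ) (U : Set (Fin p → ℝ)) (hU : IsOpen U)
    (φ ψ : smoothFunctions p U →ₐ[ℝ] MvPowerSeries (Fin q) (smoothFunctions p U))
    (hφ : ∀ (x₀ : U) (g : smoothFunctions p U), (g : U → ℝ) x₀ = 0 →
      ((MvPowerSeries.constantCoeff (σ := Fin q) (R := smoothFunctions p U) (φ g) : U → ℝ)) x₀ = 0)
    (hψ : ∀ (x₀ : U) (g : smoothFunctions p U), (g : U → ℝ) x₀ = 0 →
      ((MvPowerSeries.constantCoeff (σ := Fin q) (R := smoothFunctions p U) (ψ g) : U → ℝ)) x₀ = 0)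
    (hpoly : ∀ (P : MvPolynomial (Fin p) ℝ) (g : smoothFunctions p U),
      (∀ x : U, (g : U → ℝ) x = MvPolynomial.eval (x : Fin p → ℝ) P) → φ g = ψ g) :
    φ = ψ := by
  refine AlgHom.ext fun f => MvPowerSeries.ext fun n => smoothFunctions.ext_evalAt fun x₀ => ?_
  let evalCoeffs : MvPowerSeries (Fin q) (smoothFunctions p U) →+* MvPowerSeries (Fin q) ℝ :=
    MvPowerSeries.map (smoothFunctions.evalAt x₀)
  have hx₀ : evalCoeffs.comp φ.toRingHom = evalCoeffs.comp ψ.toRingHom := by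
    refine MvPowerSeries.ringHom_ext_of_forall_exists_sub_mem_sq 
      (I := RingHom.ker (smoothFunctions.evalAt x₀))
      (fun g hg => by simpa [evalCoeffs] using hφ x₀ g hg)
      (fun g hg => by simpa [evalCoeffs] using hψ x₀ g hg) fun g => ?_
    obtain ⟨P, hP⟩ := smoothFunctions.exists_sub_aeval_coord_mem_ker_evalAt_sq hU g x₀
    exact ⟨_, congrArg evalCoeffs (hpoly P _ (smoothFunctions.evalAt_aeval_coord · P)), hP⟩
  simpa [evalCoeffs] using congr(MvPowerSeries.coeff n ($hx₀ f))
end
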